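/- Under the same hypotheses, ∫₀^{x₀} x⁴ dx/√(a² - 2bx + cx²) = (35b⁴/(8c⁴) - 15a²b²/(4c³) + 3a⁴/(8c²))·Δ - 35ab³/(8c⁴) + 55a³b/(24c³). -/

import Mathlib

/-!
Differentiating `x ^ m * √Q` with `Q x = p - 2 b x + c x ²` gives
`(m p x ^ (m - 1) - (2 m + 1) b x ^ m + (m + 1) c x ^ (m + 1)) / √Q`, so integrating over `[0, x₀]`,
where `√Q` vanishes at `x₀` and equals `a` at `0`, yields Euler's recurrence between the moments
`I k = ∫ x ^ k / √Q`. Four steps of it express `I 4` through `Δ = I 0`. The derivative formula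
holds wherever `Q ≠ 0`, so the fundamental theorem of calculus applies off the finitely many zeros
of `Q`, without locating the first root of `Q` in `[0, x₀]`.
-/

open Real intervalIntegral MeasureTheory

noncomputable def quadraticMoment (p b c u v : ℝ) (k : ℕ) : ℝ :=
  ∫ x in u..v, x ^ k / √(p - 2 * b * x + c * x ^ 2)

section QuadraticMoment

variable {p b c : ℝ}

theorem hasDerivAt_pow_mul_sqrt_quadratic (m : ℕ) {x : ℝ} (hx : p - 2 * b * x + c * x ^ 2 ≠ 0) :
    HasDerivAt (fun x => x ^ m * √(p - 2 * b * x + c * x ^ 2))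
      (m * p * (x ^ (m - 1) / √(p - 2 * b * x + c * x ^ 2))
        - (2 * m + 1) * b * (x ^ m / √(p - 2 * b * x + c * x ^ 2))
        + (m + 1) * c * (x ^ (m + 1) / √(p - 2 * b * x + c * x ^ 2))) x := by
  have hQ : HasDerivAt (fun x => p - 2 * b * x + c * x ^ 2) (2 * c * x - 2 * b) x := by
    refine ((((hasDerivAt_id x).const_mul (2 * b)).const_sub p).add
      ((hasDerivAt_pow 2 x).const_mul c)).congr_deriv ?_
    simp
    ring
  refine ((hasDerivAt_pow m x).mul (hQ.sqrt hx)).congr_deriv ?_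
  rcases eq_or_ne (√(p - 2 * b * x + c * x ^ 2)) 0 with hr | hr
  -- where `Q x < 0`, both sides vanish through `√(Q x) = 0` and the convention `y / 0 = 0`
  · simp [hr]
  · have hsq := mul_self_sqrt (sqrt_ne_zero'.mp hr).le
    generalize √(p - 2 * b * x + c * x ^ 2) = r at hr hsq ⊢
    rcases m with _ | k
    · field_simp
      ring
    · simp only [Nat.add_sub_cancel, pow_succ]
      push_cast
      field_simp
      linear_combination ((k + 1 : ℝ) * x ^ k) * hsq

open Polynomial in
theorem finite_setOf_quadratic_eq_zero (hp : p ≠ 0) :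
    {x : ℝ | p - 2 * b * x + c * x ^ 2 = 0}.Finite := by
  let P : ℝ[X] := C p - C (2 * b) * X + C c * X ^ 2
  have hP : ∀ x, P.eval x = p - 2 * b * x + c * x ^ 2 := fun x => by simp [P]
  have hP0 : P ≠ 0 := fun h => hp (by simpa [hP] using congrArg (eval 0) h)
  simpa [hP] using finite_setOfPred_isRoot hP0

theorem quadraticMoment_recurrence (m : ℕ) {u v : ℝ} (hp : p ≠ 0)
    (hint : ∀ k : ℕ, IntervalIntegrable (fun x => x ^ k / √(p - 2 * b * x + c * x ^ 2)) volume u v) :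
    m * p * quadraticMoment p b c u v (m - 1) - (2 * m + 1) * b * quadraticMoment p b c u v m
      + (m + 1) * c * quadraticMoment p b c u v (m + 1)
      = v ^ m * √(p - 2 * b * v + c * v ^ 2) - u ^ m * √(p - 2 * b * u + c * u ^ 2) := by
  have h₁ := (hint (m - 1)).const_mul (m * p)
  have h₂ := (hint m).const_mul ((2 * m + 1) * b)
  have h₃ := (hint (m + 1)).const_mul ((m + 1) * c)
  simp only [quadraticMoment]
  rw [← intervalIntegral.integral_const_mul, ← intervalIntegral.integral_const_mul,
    ← intervalIntegral.integral_const_mul, ← integral_sub h₁ h₂, ← integral_add (h₁.sub h₂) h₃]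
  exact integral_eq_of_hasDerivAt_off_countable _ _ (finite_setOf_quadratic_eq_zero hp).countable
    (by fun_prop) (fun x hx => hasDerivAt_pow_mul_sqrt_quadratic m hx.2) ((h₁.sub h₂).add h₃)

end QuadraticMoment

theorem euler_fourth_moment_general (a b c x₀ : ℝ) (hc : c ≠ 0) (ha : 0 < a)
    (hroot : a ^ 2 - 2 * b * x₀ + c * x₀ ^ 2 = 0)
    (hint : ∀ k : ℕ, IntervalIntegrable
      (fun x => x ^ k / Real.sqrt (a ^ 2 - 2 * b * x + c * x ^ 2))
      MeasureTheory.volume 0 x₀)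
    (Δ : ℝ)
    (hΔ : Δ = ∫ x in (0 : ℝ)..x₀, 1 / Real.sqrt (a ^ 2 - 2 * b * x + c * x ^ 2)) :
    ∫ x in (0 : ℝ)..x₀, x ^ 4 / Real.sqrt (a ^ 2 - 2 * b * x + c * x ^ 2)
      = (35 * b ^ 4 / (8 * c ^ 4) - 15 * a ^ 2 * b ^ 2 / (4 * c ^ 3) + 3 * a ^ 4 / (8 * c ^ 2)) * Δ
        - 35 * a * b ^ 3 / (8 * c ^ 4) + 55 * a ^ 3 * b / (24 * c ^ 3) := by
  have boundary (m : ℕ) : x₀ ^ m * √(a ^ 2 - 2 * b * x₀ + c * x₀ ^ 2)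
      - 0 ^ m * √(a ^ 2 - 2 * b * 0 + c * 0 ^ 2) = -(0 ^ m * a) := by
    simp [hroot, sqrt_sq ha.le]
  have recurrence (m : ℕ) :=
    (quadraticMoment_recurrence m (pow_pos ha 2).ne' hint).trans (boundary m)
  have e0 := recurrence 0
  have e1 := recurrence 1
  have e2 := recurrence 2
  have e3 := recurrence 3
  set I := quadraticMoment (a ^ 2) b c 0 x₀
  have hI0 : I 0 = Δ := by simp [I, quadraticMoment, hΔ]
  norm_num [hI0] at e0 e1 e2 e3
  have hI1 : I 1 = (b * Δ - a) / c := by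
    rw [eq_div_iff hc]
    linear_combination e0
  have hI2 : I 2 = (3 * b * I 1 - a ^ 2 * Δ) / (2 * c) := by
    rw [eq_div_iff (by positivity)]
    linear_combination e1
  have hI3 : I 3 = (5 * b * I 2 - 2 * a ^ 2 * I 1) / (3 * c) := by
    rw [eq_div_iff (by positivity)]
    linear_combination e2
  have hI4 : I 4 = (7 * b * I 3 - 3 * a ^ 2 * I 2) / (4 * c) := by
    rw [eq_div_iff (by positivity)]
    linear_combination e3
  change I 4 = _
  rw [hI4, hI3, hI2, hI1]
  field_simp
  ring

theorem euler_fourth_moment (a b c x₀ : ℝ) (hc : c ≠ 0) (ha : 0 < a) (hx₀ : 0 < x₀)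
    (hroot : a ^ 2 - 2 * b * x₀ + c * x₀ ^ 2 = 0)
    (hint : ∀ k : ℕ, IntervalIntegrable
      (fun x => x ^ k / Real.sqrt (a ^ 2 - 2 * b * x + c * x ^ 2))
      MeasureTheory.volume 0 x₀)
    (Δ : ℝ)
    (hΔ : Δ = ∫ x in (0 : ℝ)..x₀, 1 / Real.sqrt (a ^ 2 - 2 * b * x + c * x ^ 2)) :
    ∫ x in (0 : ℝ)..x₀, x ^ 4 / Real.sqrt (a ^ 2 - 2 * b * x + c * x ^ 2)
      = (35 * b ^ 4 / (8 * c ^ 4) - 15 * a ^ 2 * b ^ 2 / (4 * c ^ 3) + 3 * a ^ 4 / (8 * c ^ 2)) * Δ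
        - 35 * a * b ^ 3 / (8 * c ^ 4) + 55 * a ^ 3 * b / (24 * c ^ 3) :=
  euler_fourth_moment_general a b c x₀ hc ha hroot hint Δ hΔ
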